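/- Upgrading-merge of two symbol pairs yields an upgraded channel: let W : {0,1} → Y be BMS, y₁, y₂ ∈ Y with LR values 1 ≤ λ₁ ≤ λ₂ where λᵢ = W(yᵢ|0)/W(ȳᵢ|0). Set a₁ = W(y₁|0), b₁ = W(ȳ₁|0), and (for λ₂ < ∞) α₂ = λ₂(a₁+b₁)/(λ₂+1), β₂ = (a₁+b₁)/(λ₂+1). Define Q' on Z' = Y \ {y₁,ȳ₁,y₂,ȳ₂} ∪ {z₂, z̄₂} by Q'(z₂|0) = W(y₂|0)+α₂, Q'(z₂|1) = W(y₂|1)+β₂, Q'(z̄₂|0) = W(ȳ₂|0)+β₂, Q'(z̄₂|1) = W(ȳ₂|1)+α₂, and Q' = W on remaining symbols. Then Q' is upgraded with respect to W, i.e., W is degraded with respect to Q'. -/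

import Mathlib

open scoped BigOperators

/-- `P : A → B → ℝ` is a channel: nonnegative entries, rows sum to 1. -/
def IsChannel {A B : Type*} [Fintype B] (P : A → B → ℝ) : Prop :=
  (∀ a b, 0 ≤ P a b) ∧ ∀ a, ∑ b, P a b = 1

/-- `Q` is degraded with respect to `W`. -/
def DegradedWrt {A B : Type*} [Fintype A] [Fintype B]
    (Q : Bool → B → ℝ) (W : Bool → A → ℝ) : Prop :=
  ∃ P : A → B → ℝ, IsChannel P ∧ ∀ x b, Q x b = ∑ a, W x a * P a b

/-!
The degrading channel fixes every symbol that is not merged and splits `z₂` among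
`y₂, y₁, ȳ₁` (and `z̄₂` among their conjugates) with weights `g, u, v`. Because
`1 ≤ λ₁ ≤ λ₂`, the likelihood ratio of `(y₁, ȳ₁)` lies in `[1/λ₂, λ₂]`, so `(a₁, b₁)` is a
nonnegative combination `u (λ₂, 1) + v (1, λ₂)`; the mass `α₂ + β₂ = a₁ + b₁` added to the pair
`(y₂, ȳ₂)` is exactly what makes `g + u + v = 1`.
-/

theorem exists_nonneg_solution_of_le_mul {l a b : ℝ} (hl : 1 ≤ l) (hb : 0 ≤ b)
    (hab : b ≤ l * a) (hba : a ≤ l * b) :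
    ∃ u v : ℝ, 0 ≤ u ∧ 0 ≤ v ∧ l * u + v = a ∧ u + l * v = b := by
  rcases hl.eq_or_lt with rfl | hl
  · refine ⟨b / 2, b / 2, by positivity, by positivity, ?_, ?_⟩ <;> linarith
  · have hd : 0 < l ^ 2 - 1 := by nlinarith
    refine ⟨(l * a - b) / (l ^ 2 - 1), (l * b - a) / (l ^ 2 - 1),
      div_nonneg (by linarith) hd.le, div_nonneg (by linarith) hd.le, ?_, ?_⟩ <;>
    · field_simp
      ring

theorem exists_merge_weights {l a b B s : ℝ} (hl : 1 ≤ l) (hb : 0 ≤ b)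
    (hab : b ≤ l * a) (hba : a ≤ l * b) (hB : 0 < B) (hs : s = B + (a + b) / (l + 1)) :
    ∃ g u v : ℝ, 0 ≤ g ∧ 0 ≤ u ∧ 0 ≤ v ∧ g + u + v = 1 ∧
      s * g = B ∧ l * s * u + s * v = a ∧ s * u + l * s * v = b := by
  obtain ⟨u, v, hu, hv, hua, hvb⟩ := exists_nonneg_solution_of_le_mul hl hb hab hba
  have huv : u + v = (a + b) / (l + 1) := by
    rw [eq_div_iff (by linarith)]
    linarith
  have hs₀ : 0 < s := by rw [hs, ← huv]; positivity
  refine ⟨B / s, u / s, v / s, by positivity, by positivity, by positivity, ?_, ?_, ?_, ?_⟩ <;>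
    field_simp <;> linarith

section

variable {Y : Type*} [DecidableEq Y]

def mergeKernel (p : Y → Prop) (r : Bool → Y → ℝ) : {y // p y} ⊕ Bool → Y → ℝ :=
  Sum.elim (fun w y => if y = w then 1 else 0) r

theorem isChannel_mergeKernel [Fintype Y] (p : Y → Prop) {r : Bool → Y → ℝ}
    (hr : IsChannel r) : IsChannel (mergeKernel p r) := by
  refine ⟨?_, ?_⟩
  · rintro (w | b) y
    · simp only [mergeKernel, Sum.elim_inl]
      split_ifs <;> norm_num
    · exact hr.1 b y
  · rintro (w | b)
    · simp [mergeKernel]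
    · exact hr.2 b

theorem sum_mul_mergeKernel [Fintype Y] (p : Y → Prop) [DecidablePred p] (f : Y → ℝ)
    (q : Bool → ℝ) (r : Bool → Y → ℝ) (y : Y) :
    ∑ z, Sum.elim (fun w : {y // p y} => f w) q z * mergeKernel p r z y =
      (if p y then f y else 0) + (q true * r true y + q false * r false y) := by
  rw [Fintype.sum_sum_type, Fintype.sum_bool]
  congr 1
  simp only [mergeKernel, Sum.elim_inl, mul_ite, mul_one, mul_zero]
  rw [← Finset.sum_subtype (Finset.univ.filter p) (by simp) (fun w => if y = w then f w else 0)]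
  simp

def threePoint (a b d : Y) (p q r : ℝ) (y : Y) : ℝ :=
  (if y = a then p else 0) + (if y = b then q else 0) + (if y = d then r else 0)

def splitRows (c : Y → Y) (y₁ y₂ : Y) (g u v : ℝ) : Bool → Y → ℝ
  | true => threePoint (c y₂) (c y₁) y₁ g u v
  | false => threePoint y₂ y₁ (c y₁) g u v

theorem isChannel_splitRows [Fintype Y] (c : Y → Y) (y₁ y₂ : Y) {g u v : ℝ} (hg : 0 ≤ g)
    (hu : 0 ≤ u) (hv : 0 ≤ v) (h : g + u + v = 1) : IsChannel (splitRows c y₁ y₂ g u v) := by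
  refine ⟨fun x y => ?_, fun x => ?_⟩ <;> cases x
  all_goals simp only [splitRows, threePoint]
  all_goals first
    | positivity
    | simpa [Finset.sum_add_distrib] using h

theorem apply_eq_merged_of_mem {c : Y → Y} (hc : Function.Involutive c) {W : Bool → Y → ℝ}
    (hsym : ∀ y, W true y = W false (c y)) {y₁ y₂ : Y} (hdist : [y₁, c y₁, y₂, c y₂].Nodup)
    {l β g u v : ℝ} (hA₂ : W false y₂ = l * W false (c y₂))
    (hg : (W false (c y₂) + β) * g = W false (c y₂))
    (hu : l * (W false (c y₂) + β) * u + (W false (c y₂) + β) * v = W false y₁)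
    (hv : (W false (c y₂) + β) * u + l * (W false (c y₂) + β) * v = W false (c y₁))
    (x : Bool) {y : Y} (hy : y = y₁ ∨ y = c y₁ ∨ y = y₂ ∨ y = c y₂) :
    W x y = (if x then W true (c y₂) + l * β else W false (c y₂) + β) *
        splitRows c y₁ y₂ g u v true y +
      (if x then W true y₂ + β else W false y₂ + l * β) * splitRows c y₁ y₂ g u v false y := by
  simp only [List.nodup_cons, List.mem_cons, List.not_mem_nil, or_false, not_or] at hdist
  obtain ⟨⟨h₁c₁, h₁₂, h₁c₂⟩, ⟨hc₁₂, hc₁c₂⟩, h₂c₂, -⟩ := hdist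
  rcases hy with rfl | rfl | rfl | rfl <;> cases x <;>
    simp [splitRows, threePoint, hsym, hc _, hA₂, h₁c₁, h₁₂, h₁c₂, hc₁₂, hc₁c₂, h₂c₂,
      Ne.symm h₁c₁, Ne.symm h₁₂, Ne.symm h₁c₂, Ne.symm hc₁₂, Ne.symm hc₁c₂, Ne.symm h₂c₂] <;>
    first | linarith | linear_combination (-l) * hg

end

/-- The new alphabet is `(Y \ {y₁, ȳ₁, y₂, ȳ₂}) ⊕ Bool`, with `inr false = z₂` and
`inr true = z̄₂`. -/
theorem upgrading_merge_two_pairs {Y : Type*} [Fintype Y] [DecidableEq Y]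
    (W : Bool → Y → ℝ)
    (c : Y → Y) (hc : Function.Involutive c)
    (hsym : ∀ y, W true y = W false (c y))
    (y₁ y₂ : Y) (hdist : [y₁, c y₁, y₂, c y₂].Nodup)
    (lam₁ lam₂ a₁ b₁ α₂ β₂ : ℝ)
    (hb₁ : 0 < W false (c y₁)) (hb₂ : 0 < W false (c y₂))
    (ha₁ : a₁ = W false y₁) (hb₁' : b₁ = W false (c y₁))
    (hlam₁ : lam₁ = W false y₁ / W false (c y₁))
    (hlam₂ : lam₂ = W false y₂ / W false (c y₂))
    (hone : 1 ≤ lam₁) (hord : lam₁ ≤ lam₂)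
    (hα₂ : α₂ = lam₂ * (a₁ + b₁) / (lam₂ + 1))
    (hβ₂ : β₂ = (a₁ + b₁) / (lam₂ + 1)) :
    DegradedWrt W
      ((fun x s =>
          Sum.elim (fun w : {y : Y // y ≠ y₁ ∧ y ≠ c y₁ ∧ y ≠ y₂ ∧ y ≠ c y₂} => W x (w : Y))
            (fun b : Bool =>
              if b then (if x then W true (c y₂) + α₂ else W false (c y₂) + β₂)
              else (if x then W true y₂ + β₂ else W false y₂ + α₂)) s) :
        Bool → ({y : Y // y ≠ y₁ ∧ y ≠ c y₁ ∧ y ≠ y₂ ∧ y ≠ c y₂} ⊕ Bool) → ℝ) := by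
  subst ha₁ hb₁'
  have hA₁ : W false y₁ = lam₁ * W false (c y₁) := by rw [hlam₁]; field_simp
  have hA₂ : W false y₂ = lam₂ * W false (c y₂) := by rw [hlam₂]; field_simp
  have hl₂ : 1 ≤ lam₂ := hone.trans hord
  have hb₁a₁ : W false (c y₁) ≤ W false y₁ := by rw [hA₁]; nlinarith
  obtain ⟨g, u, v, hg, hu, hv, hsum, hs₂, hs₁, hs₁'⟩ :=
    exists_merge_weights (a := W false y₁) (B := W false (c y₂)) (s := W false (c y₂) + β₂)
      hl₂ hb₁.le (by nlinarith) (by rw [hA₁]; exact mul_le_mul_of_nonneg_right hord hb₁.le)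
      hb₂ (by rw [hβ₂])
  obtain rfl : α₂ = lam₂ * β₂ := by rw [hα₂, hβ₂]; ring
  refine ⟨mergeKernel _ (splitRows c y₁ y₂ g u v),
    isChannel_mergeKernel _ (isChannel_splitRows c y₁ y₂ hg hu hv hsum), fun x y => ?_⟩
  rw [sum_mul_mergeKernel]
  simp only [↓reduceIte, Bool.false_eq_true]
  by_cases hy : y ≠ y₁ ∧ y ≠ c y₁ ∧ y ≠ y₂ ∧ y ≠ c y₂
  · simp [hy, splitRows, threePoint]
  · rw [if_neg hy, zero_add]
    exact apply_eq_merged_of_mem hc hsym hdist hA₂ hs₂ hs₁ hs₁' x (by tauto)
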